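/- arXiv:1911.09744 — 3 statements merged into one kernel-verified Lean document; each statement's English description precedes it below -/
import Mathlib

section
/- Let g : ℝⁿ → ℂ be smooth and compactly supported, and let f : ℝⁿ → ℝ be smooth with no critical points on the support of g (i.e. the gradient ∇f(x) ≠ 0 for every x in supp g). Then for every natural number N there exists a constant C_N such that |∫_{ℝⁿ} g(x) e^{i f(x)/ℏ} dx| ≤ C_N ℏ^N for all ℏ ∈ (0,1]. In other words, the oscillatory integral is O(ℏ^N) as ℏ → 0⁺ for every N. -/
open MeasureTheory Set
open scoped Manifold

lemma div_int_zero (m : ℕ) (F : Fin (m+1) → (Fin (m+1) → ℝ) → ℂ)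
    (hF : ∀ i, ContDiff ℝ 1 (F i)) (hsupp : ∀ i, HasCompactSupport (F i)) :
    ∫ x : Fin (m+1) → ℝ, ∑ i, fderiv ℝ (F i) x (Pi.single i 1) = 0 := by
  obtain ⟨r, hr⟩ : ∃ r : ℝ, ∀ i, ∀ x ∈ tsupport (F i), ‖x‖ ≤ r := by
    obtain ⟨r, hr⟩ := (isCompact_iUnion (fun i => hsupp i)).isBounded.subset_closedBall 0
    exact ⟨r, fun i x hx => by simpa using hr (Set.mem_iUnion.2 ⟨i, hx⟩)⟩
  set R : ℝ := |r| + 1 with hR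
  have hRpos : 0 < R := by positivity
  have hrR : r < R := lt_of_le_of_lt (le_abs_self r) (by simp [hR])
  have hout : ∀ i, ∀ x : Fin (m+1) → ℝ, R ≤ ‖x‖ → F i x = 0 := by
    intro i x hx
    apply image_eq_zero_of_notMem_tsupport
    intro hmem
    exact absurd (hr i x hmem) (by linarith)
  set a : Fin (m+1) → ℝ := fun _ => -R
  set b : Fin (m+1) → ℝ := fun _ => R
  have hab : a ≤ b := fun i => by simp only [a, b]; linarith
  have hcont : ∀ i, Continuous (fun x => fderiv ℝ (F i) x (Pi.single i (1:ℝ))) := fun i =>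
    ((hF i).continuous_fderiv one_ne_zero).clm_apply continuous_const
  have key := integral_divergence_of_hasFDerivAt_off_countable' a b hab F
      (fun i x => fderiv ℝ (F i) x) ∅ Set.countable_empty
      (fun i => ((hF i).continuous).continuousOn)
      (fun x _ i => ((hF i).differentiable one_ne_zero).differentiableAt.hasFDerivAt)
      ((continuous_finset_sum _ (fun i _ => hcont i)).continuousOn.integrableOn_compact
        isCompact_Icc)
  have h1 : ∀ i : Fin (m+1), ∀ (c : ℝ), |c| = R → ∀ y : Fin (m+1) → ℝ, y i = c → F i y = 0 := by
    intro i c hc y hy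
    apply hout i
    calc R = |c| := hc.symm
      _ = |y i| := by rw [hy]
      _ ≤ ‖y‖ := by simpa using norm_le_pi_norm y i
  have hfaces : ∀ i : Fin (m+1),
      ((∫ x in Icc (a ∘ i.succAbove) (b ∘ i.succAbove), F i (i.insertNth (b i) x)) -
        ∫ x in Icc (a ∘ i.succAbove) (b ∘ i.succAbove), F i (i.insertNth (a i) x)) = 0 := by
    intro i
    have hb : ∀ x : Fin m → ℝ, F i (i.insertNth (b i) x) = 0 := fun x =>
      h1 i R (abs_of_pos hRpos) _ (by rw [Fin.insertNth_apply_same])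
    have ha : ∀ x : Fin m → ℝ, F i (i.insertNth (a i) x) = 0 := fun x =>
      h1 i (-R) (by rw [abs_neg]; exact abs_of_pos hRpos) _ (by rw [Fin.insertNth_apply_same])
    simp [hb, ha]
  rw [Finset.sum_congr rfl (fun i _ => hfaces i), Finset.sum_const_zero] at key
  rw [← key]
  apply (setIntegral_eq_integral_of_forall_compl_eq_zero ?_).symm
  intro x hx
  apply Finset.sum_eq_zero
  intro i _
  have hnot : x ∉ tsupport (F i) := by
    intro hmem
    apply hx
    have hxr := hr i x hmem
    constructor <;> intro j <;> have hj := (norm_le_pi_norm x j).trans hxr <;>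
      rw [Real.norm_eq_abs, abs_le] at hj
    · simp only [a]; linarith [hj.1]
    · simp only [b]; linarith [hj.2]
  have hz : fderiv ℝ (F i) x = 0 := by
    by_contra h
    exact hnot (support_fderiv_subset (𝕜 := ℝ) (by simpa using h))
  simp [hz]

private lemma infle1 : (1 : WithTop ℕ∞) ≤ ((⊤:ℕ∞) : WithTop ℕ∞) := by exact_mod_cast le_top
private lemma infsucc : ((⊤:ℕ∞) : WithTop ℕ∞) + 1 ≤ ((⊤:ℕ∞) : WithTop ℕ∞) := by
  exact_mod_cast le_rfl

lemma ibp_step (m : ℕ) (f : (Fin (m+1) → ℝ) → ℝ) (hf : ContDiff ℝ (⊤ : ℕ∞) f)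
    (θ : Fin (m+1) → (Fin (m+1) → ℝ) → ℝ) (hθ : ∀ i, ContDiff ℝ ((⊤:ℕ∞) : WithTop ℕ∞) (θ i))
    (h : (Fin (m+1) → ℝ) → ℂ) (hh : ContDiff ℝ ((⊤:ℕ∞) : WithTop ℕ∞) h)
    (hhs : HasCompactSupport h)
    (hone : ∀ x, h x * (∑ i, (θ i x : ℂ) * (fderiv ℝ f x (Pi.single i 1) : ℂ)) = h x)
    (ℏ : ℝ) (hℏ : 0 < ℏ) :
    ∫ x, h x * Complex.exp (Complex.I * (f x : ℂ) / (ℏ : ℂ)) =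
      (ℏ : ℂ) * ∫ x, (Complex.I *
          ∑ i, fderiv ℝ (fun y => h y * (θ i y : ℂ)) x (Pi.single i 1)) *
        Complex.exp (Complex.I * (f x : ℂ) / (ℏ : ℂ)) := by
  set c : ℂ := Complex.I / ℏ with hc
  have hcne : c ≠ 0 := by
    simp [hc, Complex.I_ne_zero, Complex.ext_iff, ne_eq]
    intro h'
    exact absurd h' (by positivity)
  set φ : (Fin (m+1) → ℝ) → ℂ := fun x => Complex.exp (c * (f x : ℂ)) with hφdef
  have hφeq : ∀ x, Complex.exp (Complex.I * (f x : ℂ) / (ℏ : ℂ)) = φ x := by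
    intro x; rw [hφdef]; simp only [hc]; ring_nf
  have hfd : ∀ x, HasFDerivAt f (fderiv ℝ f x) x :=
    fun x => (hf.differentiable (by simp) x).hasFDerivAt
  have hφ' : ∀ x, HasFDerivAt φ
      (Complex.exp (c * (f x : ℂ)) • (c • (Complex.ofRealCLM.comp (fderiv ℝ f x)))) x := by
    intro x
    exact ((Complex.ofRealCLM.hasFDerivAt.comp x (hfd x)).const_mul c).cexp
  have hφcont : Continuous φ :=
    Complex.continuous_exp.comp (continuous_const.mul (Complex.continuous_ofReal.comp hf.continuous))
  -- the functions u i = h * θ i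
  set u : Fin (m+1) → (Fin (m+1) → ℝ) → ℂ := fun i y => h y * (θ i y : ℂ) with hu
  have hucd : ∀ i, ContDiff ℝ ((⊤:ℕ∞) : WithTop ℕ∞) (u i) :=
    fun i => hh.mul (Complex.ofRealCLM.contDiff.comp (hθ i))
  have husupp : ∀ i, HasCompactSupport (u i) := fun i => hhs.mul_right
  set S : (Fin (m+1) → ℝ) → ℂ :=
    fun x => ∑ i, fderiv ℝ (u i) x (Pi.single i 1) with hS
  have hScont : Continuous S := by
    apply continuous_finset_sum
    intro i _
    exact (((hucd i).of_le infle1).continuous_fderiv one_ne_zero).clm_apply continuous_const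
  have hSsupp : HasCompactSupport S := by
    apply hhs.mono'
    intro x hx
    simp only [hS, Function.mem_support] at hx
    obtain ⟨i, -, hi⟩ := Finset.exists_ne_zero_of_sum_ne_zero hx
    have : x ∈ Function.support (fderiv ℝ (u i)) := by
      simp only [Function.mem_support]
      intro h0; rw [h0] at hi; simp at hi
    have hx1 : x ∈ tsupport (u i) := support_fderiv_subset (𝕜 := ℝ) this
    have : tsupport (u i) ⊆ tsupport h :=
      closure_mono (Function.support_mul_subset_left _ _)
    exact this hx1
  -- apply the divergence theorem to F i = u i * φ
  set F : Fin (m+1) → (Fin (m+1) → ℝ) → ℂ := fun i y => u i y * φ y with hF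
  have hφcd : ContDiff ℝ (⊤ : ℕ∞) φ := by
    apply Complex.contDiff_exp.comp
    exact contDiff_const.mul (Complex.ofRealCLM.contDiff.comp hf)
  have hFcd : ∀ i, ContDiff ℝ 1 (F i) := fun i => ((hucd i).mul (hφcd.of_le (by simp))).of_le infle1
  have hFsupp : ∀ i, HasCompactSupport (F i) := fun i => (husupp i).mul_right
  have key := div_int_zero m F hFcd hFsupp
  have hptwise : ∀ x, (∑ i, fderiv ℝ (F i) x (Pi.single i 1)) =
      c * (h x * φ x) + S x * φ x := by
    intro x
    have hstep : ∀ i : Fin (m+1), fderiv ℝ (F i) x (Pi.single i 1) =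
        u i x * (φ x * (c * (fderiv ℝ f x (Pi.single i 1) : ℂ))) +
          φ x * fderiv ℝ (u i) x (Pi.single i 1) := by
      intro i
      have hdu : DifferentiableAt ℝ (u i) x := ((hucd i).differentiable (by simp)).differentiableAt
      have hdφ : DifferentiableAt ℝ φ x := (hφ' x).differentiableAt
      rw [show F i = u i * φ from rfl]
      rw [fderiv_mul hdu hdφ, (hφ' x).fderiv]
      simp only [ContinuousLinearMap.add_apply, ContinuousLinearMap.smul_apply,
        ContinuousLinearMap.coe_comp', Function.comp_apply, Complex.ofRealCLM_apply,
        smul_eq_mul]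
      try ring
    rw [Finset.sum_congr rfl fun i _ => hstep i, Finset.sum_add_distrib]
    have h1 : ∑ i, u i x * (φ x * (c * (fderiv ℝ f x (Pi.single i 1) : ℂ))) =
        c * (h x * φ x) := by
      rw [← hone x]
      rw [Finset.mul_sum]
      rw [Finset.sum_mul, Finset.mul_sum]
      apply Finset.sum_congr rfl
      intro i _
      simp only [hu]
      ring
    rw [h1]
    congr 1
    simp only [hS]
    rw [Finset.sum_mul]
    exact Finset.sum_congr rfl fun i _ => mul_comm _ _
  rw [funext hptwise] at key
  -- split the integral
  have hint1 : Integrable (fun x => h x * φ x) :=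
    (hh.continuous.mul hφcont).integrable_of_hasCompactSupport hhs.mul_right
  have hint2 : Integrable (fun x => S x * φ x) :=
    (hScont.mul hφcont).integrable_of_hasCompactSupport hSsupp.mul_right
  rw [integral_add ((hint1.const_mul c)) hint2, integral_const_mul] at key
  have : ∫ x, h x * φ x = -(c⁻¹) * ∫ x, S x * φ x := by
    field_simp at key ⊢
    linear_combination key
  simp only [hφeq]
  rw [this]
  have hrhs : ∫ x, (Complex.I * S x) * φ x = Complex.I * ∫ x, S x * φ x := by
    rw [← integral_const_mul]
    congr 1; funext x; ring
  rw [hrhs]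
  have hcinv : -(c⁻¹) = (ℏ : ℂ) * Complex.I := by
    rw [hc]
    field_simp
    try rw [Complex.inv_I]
    rw [Complex.I_sq]; ring
  rw [hcinv]; ring

/-- If `g : ℝⁿ → ℂ` is smooth and compactly supported and `f : ℝⁿ → ℝ`
is smooth with no critical points on the support of `g`, then the oscillatory integral
`∫ g(x) e^{i f(x)/ℏ} dx` is `O(ℏ^N)` as `ℏ → 0⁺` for every `N`. -/
theorem oscillatory_integral_no_critical_points
    (n : ℕ) (g : (Fin n → ℝ) → ℂ) (f : (Fin n → ℝ) → ℝ)
    (hg : ContDiff ℝ (⊤ : ℕ∞) g) (hgsupp : HasCompactSupport g)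
    (hf : ContDiff ℝ (⊤ : ℕ∞) f)
    (hcrit : ∀ x ∈ tsupport g, fderiv ℝ f x ≠ 0) :
    ∀ N : ℕ, ∃ C : ℝ, ∀ ℏ ∈ Set.Ioc (0 : ℝ) 1,
      ‖∫ x : (Fin n → ℝ), g x * Complex.exp (Complex.I * (f x : ℂ) / (ℏ : ℂ))‖ ≤
        C * ℏ ^ N := by
  cases n with
  | zero =>
    have hg0 : g = 0 := by
      funext x
      by_contra hx
      apply hcrit x (subset_tsupport g hx)
      apply ContinuousLinearMap.ext
      intro v
      rw [show v = (0 : Fin 0 → ℝ) from Subsingleton.elim _ _]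
      exact map_zero _
    intro N
    exact ⟨0, fun ℏ hℏ => by simp [hg0]⟩
  | succ m =>
    -- the gradient components and their square sum
    set d : Fin (m+1) → (Fin (m+1) → ℝ) → ℝ :=
      fun i x => fderiv ℝ f x (Pi.single i 1) with hd
    have hdcd : ∀ i, ContDiff ℝ ((⊤:ℕ∞) : WithTop ℕ∞) (d i) :=
      fun i => (hf.fderiv_right (by simp)).clm_apply contDiff_const
    set q : (Fin (m+1) → ℝ) → ℝ := fun x => ∑ i, (d i x)^2 with hq
    have hqcd : ContDiff ℝ ((⊤:ℕ∞) : WithTop ℕ∞) q := ContDiff.sum fun i _ => (hdcd i).pow 2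
    have hqx : ∀ x : Fin (m+1) → ℝ, fderiv ℝ f x ≠ 0 → q x ≠ 0 := by
      intro x hx hq0
      apply hx
      have hall : ∀ i, d i x = 0 := by
        intro i
        have := (Finset.sum_eq_zero_iff_of_nonneg
          (fun i _ => sq_nonneg (d i x))).mp hq0 i (Finset.mem_univ i)
        exact (pow_eq_zero_iff (by norm_num : (2:ℕ) ≠ 0)).mp this
      apply ContinuousLinearMap.ext
      intro v
      rw [ContinuousLinearMap.zero_apply]
      have hv : v = ∑ i, v i • (Pi.single i (1:ℝ) : Fin (m+1) → ℝ) := by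
        funext j
        simp [Finset.sum_apply, Pi.single_apply, Finset.sum_ite_eq']
      rw [hv, map_sum]
      apply Finset.sum_eq_zero
      intro i _
      rw [_root_.map_smul]
      have hi := hall i
      simp only [hd] at hi
      rw [hi, smul_zero]
    -- the open set of noncritical points
    set U : Set (Fin (m+1) → ℝ) := {x | fderiv ℝ f x ≠ 0} with hU
    have hUopen : IsOpen U := by
      have : Continuous (fderiv ℝ f) := hf.continuous_fderiv (by simp)
      exact isOpen_compl_singleton.preimage this
    obtain ⟨L, hLcomp, hKL, hLU⟩ :=
      exists_compact_between hgsupp hUopen (fun x hx => hcrit x hx)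
    -- smooth cutoff
    obtain ⟨χ₀, hχ0, hχ1, -⟩ := exists_contMDiffMap_zero_one_of_isClosed (n := (⊤ : ℕ∞))
      (𝓘(ℝ, Fin (m+1) → ℝ)) (isOpen_interior.isClosed_compl)
      (isClosed_tsupport g) (disjoint_compl_left.mono_right hKL)
    set χ : (Fin (m+1) → ℝ) → ℝ := ⇑χ₀ with hχ
    have hχcd : ContDiff ℝ ((⊤:ℕ∞) : WithTop ℕ∞) χ := contMDiff_iff_contDiff.mp χ₀.contMDiff
    have hχsupp : tsupport χ ⊆ U := by
      have h1 : Function.support χ ⊆ interior L := by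
        intro x hx
        by_contra hxc
        exact hx (hχ0 hxc)
      have h2 : tsupport χ ⊆ L :=
        closure_minimal (h1.trans interior_subset) hLcomp.isClosed
      exact h2.trans hLU
    -- the vector field components
    set θ : Fin (m+1) → (Fin (m+1) → ℝ) → ℝ :=
      fun i x => χ x * d i x / q x with hθ
    have hθcd : ∀ i, ContDiff ℝ ((⊤:ℕ∞) : WithTop ℕ∞) (θ i) := by
      intro i
      rw [contDiff_iff_contDiffAt]
      intro x
      by_cases hx : fderiv ℝ f x ≠ 0
      · exact (hχcd.contDiffAt.mul (hdcd i).contDiffAt).div hqcd.contDiffAt (hqx x hx)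
      · push_neg at hx
        have hxn : x ∉ tsupport χ := fun hmem => (hχsupp hmem) hx
        have hev : θ i =ᶠ[nhds x] (fun _ => (0:ℝ)) := by
          filter_upwards [(isClosed_tsupport χ).isOpen_compl.mem_nhds hxn] with y hy
          simp [hθ, image_eq_zero_of_notMem_tsupport hy]
        exact contDiffAt_const.congr_of_eventuallyEq hev
    have hsum : ∀ x, ∑ i, θ i x * d i x = χ x := by
      intro x
      by_cases hqx0 : q x = 0
      · have hχx : χ x = 0 := by
          have : x ∉ tsupport χ := by
            intro hmem
            exact hqx x (hχsupp hmem) hqx0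
          exact image_eq_zero_of_notMem_tsupport this
        simp [hθ, hχx]
      · calc ∑ i, θ i x * d i x = (χ x / q x) * ∑ i, (d i x)^2 := by
              rw [Finset.mul_sum]
              exact Finset.sum_congr rfl fun i _ => by simp only [hθ]; ring
          _ = χ x := by
              have hqq : ∑ i, (d i x)^2 = q x := rfl
              rw [hqq]
              field_simp
    -- one on support of g
    have hχ_one : ∀ x ∈ tsupport g, χ x = 1 := fun x hx => hχ1 hx
    -- the iterated functions
    set D : ((Fin (m+1) → ℝ) → ℂ) → ((Fin (m+1) → ℝ) → ℂ) :=
      fun h x => Complex.I *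
        ∑ i, fderiv ℝ (fun y => h y * (θ i y : ℂ)) x (Pi.single i 1) with hD
    set G : ℕ → (Fin (m+1) → ℝ) → ℂ := fun k => D^[k] g with hG
    have hG0 : G 0 = g := rfl
    have hGsucc : ∀ k, G (k+1) = D (G k) := fun k => Function.iterate_succ_apply' D k g
    -- basic facts about D
    have hDcd : ∀ h : (Fin (m+1) → ℝ) → ℂ, ContDiff ℝ ((⊤:ℕ∞) : WithTop ℕ∞) h →
        ContDiff ℝ ((⊤:ℕ∞) : WithTop ℕ∞) (D h) := by
      intro h hh
      apply contDiff_const.mul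
      apply ContDiff.sum
      intro i _
      exact (((hh.mul (Complex.ofRealCLM.contDiff.comp (hθcd i))).fderiv_right
        infsucc).clm_apply contDiff_const)
    have hDsupp : ∀ h : (Fin (m+1) → ℝ) → ℂ, tsupport (D h) ⊆ tsupport h := by
      intro h
      apply closure_minimal _ (isClosed_tsupport h)
      intro x hx
      simp only [Function.mem_support, hD] at hx
      have hx' : ∑ i, fderiv ℝ (fun y => h y * (θ i y : ℂ)) x (Pi.single i 1) ≠ 0 := by
        intro h0; rw [h0] at hx; simp at hx
      obtain ⟨i, -, hi⟩ := Finset.exists_ne_zero_of_sum_ne_zero hx'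
      have hm : x ∈ Function.support (fderiv ℝ (fun y => h y * (θ i y : ℂ))) := by
        simp only [Function.mem_support]
        intro h0; rw [h0] at hi; simp at hi
      have := support_fderiv_subset (𝕜 := ℝ) hm
      exact (closure_mono (Function.support_mul_subset_left _ _)) this
    -- induction package
    have hGfacts : ∀ k, ContDiff ℝ ((⊤:ℕ∞) : WithTop ℕ∞) (G k) ∧
        tsupport (G k) ⊆ tsupport g := by
      intro k
      induction k with
      | zero => exact ⟨hg.of_le (by simp), le_refl _⟩
      | succ k ih =>
        rw [hGsucc]
        exact ⟨hDcd _ ih.1, (hDsupp _).trans ih.2⟩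
    have hGcs : ∀ k, HasCompactSupport (G k) :=
      fun k => hgsupp.mono' ((subset_tsupport _).trans (hGfacts k).2)
    have hGone : ∀ k, ∀ x, G k x *
        (∑ i, (θ i x : ℂ) * (fderiv ℝ f x (Pi.single i 1) : ℂ)) = G k x := by
      intro k x
      by_cases hx : G k x = 0
      · simp [hx]
      · have hxsupp : x ∈ tsupport g := (hGfacts k).2 (subset_tsupport _ hx)
        have hr : ∑ i, θ i x * d i x = 1 := by
          rw [hsum x, hχ_one x hxsupp]
        have : ∑ i, (θ i x : ℂ) * ((fderiv ℝ f x (Pi.single i 1) : ℝ) : ℂ) = 1 := by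
          calc ∑ i, (θ i x : ℂ) * ((fderiv ℝ f x (Pi.single i 1) : ℝ) : ℂ)
              = ((∑ i, θ i x * d i x : ℝ) : ℂ) := by push_cast; rfl
            _ = 1 := by rw [hr]; norm_num
        rw [this, mul_one]
    -- the iterated integral identity
    intro N
    refine ⟨∫ x, ‖G N x‖, ?_⟩
    intro ℏ hℏ
    obtain ⟨hℏ0, hℏ1⟩ := hℏ
    have hiter : ∀ k, ∫ x, g x * Complex.exp (Complex.I * (f x : ℂ) / (ℏ : ℂ)) =
        (ℏ : ℂ)^k * ∫ x, G k x * Complex.exp (Complex.I * (f x : ℂ) / (ℏ : ℂ)) := by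
      intro k
      induction k with
      | zero => simp [hG0]
      | succ k ih =>
        rw [ih, ibp_step m f hf θ hθcd (G k) (hGfacts k).1 (hGcs k) (hGone k) ℏ hℏ0]
        rw [hGsucc k]
        push_cast
        ring_nf
        simp only [hD]; congr 1; congr 1; funext x; congr 2; ring
    have hnorm1 : ∀ x : Fin (m+1) → ℝ,
        ‖Complex.exp (Complex.I * (f x : ℂ) / (ℏ : ℂ))‖ = 1 := by
      intro x
      have : Complex.I * (f x : ℂ) / (ℏ : ℂ) = ((f x / ℏ : ℝ) : ℂ) * Complex.I := by
        push_cast; ring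
      rw [this, Complex.norm_exp_ofReal_mul_I]
    calc ‖∫ x : (Fin (m+1) → ℝ), g x * Complex.exp (Complex.I * (f x : ℂ) / (ℏ : ℂ))‖
        = ℏ^N * ‖∫ x, G N x * Complex.exp (Complex.I * (f x : ℂ) / (ℏ : ℂ))‖ := by
          rw [hiter N, norm_mul, norm_pow, Complex.norm_real,
            Real.norm_eq_abs, abs_of_pos hℏ0]
      _ ≤ ℏ^N * ∫ x, ‖G N x‖ := by
          apply mul_le_mul_of_nonneg_left _ (by positivity)
          calc ‖∫ x, G N x * Complex.exp (Complex.I * (f x : ℂ) / (ℏ : ℂ))‖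
              ≤ ∫ x, ‖G N x * Complex.exp (Complex.I * (f x : ℂ) / (ℏ : ℂ))‖ :=
                norm_integral_le_integral_norm _
            _ = ∫ x, ‖G N x‖ := by
                congr 1; funext x
                rw [norm_mul, hnorm1 x, mul_one]
      _ = (∫ x, ‖G N x‖) * ℏ^N := by ring
end

section
/- Wick's Lemma: let Q be an invertible symmetric real n×n matrix, ℏ > 0, and define W : ℝⁿ → ℂ by W(J) = exp( (ℏ/(2i))·⟨J, Q⁻¹ J⟩ ). Fix k ≥ 1 and indices i₁, …, i_k ∈ {1,…,n}. Then the iterated partial derivative (∂/∂J_{i₁}) ⋯ (∂/∂J_{i_k}) W evaluated at J = 0 equals: 0 if k is odd; and, if k = 2m, (ℏ/i)^m · Σ_σ ∏_{a < σ(a)} (Q⁻¹)_{i_a, i_{σ(a)}}, where the sum runs over all fixed-point-free involutions σ of {1,…,2m} (equivalently, over all perfect matchings of {1,…,2m}, the product being over the pairs {a, σ(a)} of the matching). -/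
open MeasureTheory Matrix

/-- Directional partial derivative `∂/∂J_i` of a function of `J ∈ ℝⁿ`. -/
noncomputable def partialDeriv (n : ℕ) (i : Fin n) (f : (Fin n → ℝ) → ℂ) :
    (Fin n → ℝ) → ℂ :=
  fun J => fderiv ℝ f J (Pi.single i 1)

/-- Iterated partial derivative `∂/∂J_{i₁} ⋯ ∂/∂J_{i_k}` along a list of indices
`idx : Fin k → Fin n` (with `∂/∂J_{idx 0}` applied outermost). -/
noncomputable def iteratedPartialDeriv (n : ℕ) :
    {k : ℕ} → (Fin k → Fin n) → ((Fin n → ℝ) → ℂ) → ((Fin n → ℝ) → ℂ)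
  | 0, _, f => f
  | (_ + 1), idx, f => partialDeriv n (idx 0) (iteratedPartialDeriv n (fun j => idx j.succ) f)

section WickAux

variable {n k : ℕ}


def invs (s : Finset (Fin k)) : Finset (Equiv.Perm (Fin k)) :=
  Finset.univ.filter fun σ => σ * σ = 1 ∧ ∀ a, a ∉ s → σ a = a

noncomputable def Fw (A : Matrix (Fin n) (Fin n) ℝ) (c : ℂ) (idx : Fin k → Fin n)
    (s : Finset (Fin k)) (J : Fin n → ℝ) : ℂ :=
  ∑ σ ∈ invs s,
    (∏ a ∈ s.filter fun a => σ a = a, (c * ((A.mulVec J (idx a) : ℝ) : ℂ))) *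
    (∏ a ∈ s.filter fun a => a < σ a, (c * ((A (idx a) (idx (σ a)) : ℝ) : ℂ)))

lemma invo_apply {σ : Equiv.Perm (Fin k)} (h : σ * σ = 1) (x : Fin k) : σ (σ x) = x := by
  rw [← Equiv.Perm.mul_apply, h, Equiv.Perm.one_apply]

lemma invs_mem {s : Finset (Fin k)} {σ : Equiv.Perm (Fin k)} :
    σ ∈ invs s ↔ σ * σ = 1 ∧ ∀ a, a ∉ s → σ a = a := by
  simp [invs]

/-- Values of `swap p a * σ` when `σ p = a`. -/
lemma swap_mul_apply {σ : Equiv.Perm (Fin k)} {p a : Fin k} (h : σ * σ = 1) (hpa : σ p = a)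
    (hne : p ≠ a) (x : Fin k) :
    (Equiv.swap p a * σ) x = if x = p then p else if x = a then a else σ x := by
  have hap : σ a = p := by rw [← hpa, invo_apply h]
  by_cases hx : x = p
  · subst hx; simp [Equiv.Perm.mul_apply, hpa]
  by_cases hxa : x = a
  · subst hxa; simp [Equiv.Perm.mul_apply, hap, hx]
  · have h1 : σ x ≠ p := fun hc => hxa (by rw [← hpa, ← hc, invo_apply h])
    have h2 : σ x ≠ a := fun hc => hx (by rw [← hap, ← hc, invo_apply h])
    simp [Equiv.Perm.mul_apply, hx, hxa, Equiv.swap_apply_of_ne_of_ne h1 h2]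

/-- Values of `swap p a * τ` when `τ` fixes `p` and `a`. -/
lemma swap_mul_apply' {τ : Equiv.Perm (Fin k)} {p a : Fin k} (h : τ * τ = 1) (hp : τ p = p)
    (ha : τ a = a) (hne : p ≠ a) (x : Fin k) :
    (Equiv.swap p a * τ) x = if x = p then a else if x = a then p else τ x := by
  by_cases hx : x = p
  · subst hx; simp [Equiv.Perm.mul_apply, hp]
  by_cases hxa : x = a
  · subst hxa; simp [Equiv.Perm.mul_apply, ha, hx, Ne.symm hne]
  · have h1 : τ x ≠ p := fun hc => hx (by rw [← hp, ← hc, invo_apply h])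
    have h2 : τ x ≠ a := fun hc => hxa (by rw [← ha, ← hc, invo_apply h])
    simp [Equiv.Perm.mul_apply, hx, hxa, Equiv.swap_apply_of_ne_of_ne h1 h2]

/-- Forward direction facts: from `σ` pairing `p` with `a = σ p`. -/
lemma fwd_facts {s : Finset (Fin k)} {p : Fin k} (hp : p ∉ s) {σ : Equiv.Perm (Fin k)}
    {a : Fin k} (h1 : σ * σ = 1) (h2 : ∀ x, x ∉ insert p s → σ x = x) (hpa : σ p = a)
    (hne : p ≠ a) :
    a ∈ s ∧
    (∀ x, (Equiv.swap p a * σ) x = if x = p then p else if x = a then a else σ x) ∧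
    (Equiv.swap p a * σ) ∈ invs s := by
  have hap : σ a = p := by rw [← hpa, invo_apply h1]
  have ha_s : a ∈ s := by
    by_contra has
    have hnotin : a ∉ insert p s := by
      simp only [Finset.mem_insert]
      push_neg
      exact ⟨Ne.symm hne, has⟩
    have := h2 a hnotin
    rw [hap] at this
    exact hne this
  have hτ := swap_mul_apply h1 hpa hne
  have hτp : (Equiv.swap p a * σ) p = p := by rw [hτ p, if_pos rfl]
  have hτa : (Equiv.swap p a * σ) a = a := by rw [hτ a, if_neg (Ne.symm hne), if_pos rfl]
  have hτinv : (Equiv.swap p a * σ) * (Equiv.swap p a * σ) = 1 := by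
    refine Equiv.ext fun x => ?_
    show (Equiv.swap p a * σ) ((Equiv.swap p a * σ) x) = x
    by_cases hx : x = p
    · subst hx; rw [hτp, hτp]
    by_cases hxa : x = a
    · subst hxa; rw [hτa, hτa]
    · have h1' : σ x ≠ p := fun hc => hxa (by rw [← hpa, ← hc, invo_apply h1])
      have h2' : σ x ≠ a := fun hc => hx (by rw [← hap, ← hc, invo_apply h1])
      have e : (Equiv.swap p a * σ) x = σ x := by rw [hτ x, if_neg hx, if_neg hxa]
      rw [e, hτ (σ x), if_neg h1', if_neg h2', invo_apply h1]
  refine ⟨ha_s, hτ, invs_mem.mpr ⟨hτinv, fun x hx => ?_⟩⟩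
  by_cases hxp : x = p
  · subst hxp; exact hτp
  · have hxa : x ≠ a := fun h => hx (h ▸ ha_s)
    have hnotin : x ∉ insert p s := by
      simp only [Finset.mem_insert]; push_neg; exact ⟨hxp, hx⟩
    rw [hτ x, if_neg hxp, if_neg hxa, h2 x hnotin]

/-- Backward direction facts: from `τ` fixing `a ∈ s` (and `p ∉ s`). -/
lemma bwd_facts {s : Finset (Fin k)} {p : Fin k} (hp : p ∉ s) {τ : Equiv.Perm (Fin k)}
    (h1 : τ * τ = 1) (h2 : ∀ x, x ∉ s → τ x = x) {a : Fin k} (ha : a ∈ s) (hfix : τ a = a) :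
    (∀ x, (Equiv.swap p a * τ) x = if x = p then a else if x = a then p else τ x) ∧
    (Equiv.swap p a * τ) ∈ invs (insert p s) ∧ (Equiv.swap p a * τ) p = a := by
  have hnepa : p ≠ a := fun h => hp (h ▸ ha)
  have hτp : τ p = p := h2 p hp
  have hσ := swap_mul_apply' h1 hτp hfix hnepa
  have hσp : (Equiv.swap p a * τ) p = a := by rw [hσ p, if_pos rfl]
  have hσa : (Equiv.swap p a * τ) a = p := by rw [hσ a, if_neg (Ne.symm hnepa), if_pos rfl]
  have hσinv : (Equiv.swap p a * τ) * (Equiv.swap p a * τ) = 1 := by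
    refine Equiv.ext fun x => ?_
    show (Equiv.swap p a * τ) ((Equiv.swap p a * τ) x) = x
    by_cases hx : x = p
    · subst hx; rw [hσp, hσa]
    by_cases hxa : x = a
    · subst hxa; rw [hσa, hσp]
    · have h1' : τ x ≠ p := fun hc => hx (by rw [← hτp, ← hc, invo_apply h1])
      have h2' : τ x ≠ a := fun hc => hxa (by rw [← hfix, ← hc, invo_apply h1])
      have e : (Equiv.swap p a * τ) x = τ x := by rw [hσ x, if_neg hx, if_neg hxa]
      rw [e, hσ (τ x), if_neg h1', if_neg h2', invo_apply h1]
  refine ⟨hσ, invs_mem.mpr ⟨hσinv, fun x hx => ?_⟩, hσp⟩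
  have hxp : x ≠ p := fun h => hx (h ▸ Finset.mem_insert_self p s)
  have hxs : x ∉ s := fun h => hx (Finset.mem_insert_of_mem h)
  have hxa : x ≠ a := fun h => hxs (h ▸ ha)
  rw [hσ x, if_neg hxp, if_neg hxa, h2 x hxs]

lemma Fw_insert (A : Matrix (Fin n) (Fin n) ℝ) (hA : A.IsSymm) (c : ℂ) (idx : Fin k → Fin n)
    (s : Finset (Fin k)) (p : Fin k) (hp : p ∉ s) (J : Fin n → ℝ) :
    Fw A c idx (insert p s) J
      = (c * ((A.mulVec J (idx p) : ℝ) : ℂ)) * Fw A c idx s J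
        + ∑ σ ∈ invs s,
            (∑ a ∈ s.filter (fun a => σ a = a),
                (∏ b ∈ (s.filter (fun a => σ a = a)).erase a,
                    (c * ((A.mulVec J (idx b) : ℝ) : ℂ)))
                  * (c * ((A (idx a) (idx p) : ℝ) : ℂ)))
              * ∏ a ∈ s.filter (fun a => a < σ a), (c * ((A (idx a) (idx (σ a)) : ℝ) : ℂ)) := by
  classical
  rw [Fw, ← Finset.sum_filter_add_sum_filter_not (invs (insert p s)) (fun σ => σ p = p)]
  congr 1
  · -- σ fixing p : gives the first term
    have hset : (invs (insert p s)).filter (fun σ => σ p = p) = invs s := by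
      ext σ
      simp only [Finset.mem_filter, invs_mem]
      constructor
      · rintro ⟨⟨h1, h2⟩, h3⟩
        refine ⟨h1, fun x hx => ?_⟩
        by_cases hxp : x = p
        · subst hxp; exact h3
        · refine h2 x ?_
          simp only [Finset.mem_insert]; push_neg; exact ⟨hxp, hx⟩
      · rintro ⟨h1, h2⟩
        exact ⟨⟨h1, fun x hx => h2 x (fun h => hx (Finset.mem_insert_of_mem h))⟩, h2 p hp⟩
    rw [hset, Fw, Finset.mul_sum]
    refine Finset.sum_congr rfl fun σ hσ => ?_
    obtain ⟨h1, h2⟩ := invs_mem.mp hσ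
    have hσp : σ p = p := h2 p hp
    have hfix : (insert p s).filter (fun a => σ a = a) = insert p (s.filter fun a => σ a = a) := by
      ext b
      by_cases hbp : b = p
      · subst hbp; simp [Finset.mem_filter, Finset.mem_insert, hσp]
      · simp [Finset.mem_filter, Finset.mem_insert, hbp]
    have hpairs : (insert p s).filter (fun a => a < σ a) = s.filter (fun a => a < σ a) := by
      ext b
      by_cases hbp : b = p
      · subst hbp; simp [Finset.mem_filter, Finset.mem_insert, hσp, hp]
      · simp [Finset.mem_filter, Finset.mem_insert, hbp]
    rw [hfix, hpairs, Finset.prod_insert (by simp [hp])]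
    ring
  · -- σ not fixing p
    have hRW : ∀ σ ∈ invs s,
        (∑ a ∈ s.filter (fun a => σ a = a),
            (∏ b ∈ (s.filter (fun a => σ a = a)).erase a,
                (c * ((A.mulVec J (idx b) : ℝ) : ℂ)))
              * (c * ((A (idx a) (idx p) : ℝ) : ℂ)))
            * ∏ a ∈ s.filter (fun a => a < σ a), (c * ((A (idx a) (idx (σ a)) : ℝ) : ℂ))
        = ∑ a ∈ s.filter (fun a => σ a = a),
            ((∏ b ∈ (s.filter (fun a => σ a = a)).erase a,
                (c * ((A.mulVec J (idx b) : ℝ) : ℂ)))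
              * (c * ((A (idx a) (idx p) : ℝ) : ℂ)))
            * ∏ a ∈ s.filter (fun a => a < σ a), (c * ((A (idx a) (idx (σ a)) : ℝ) : ℂ)) := by
      intro σ _
      rw [Finset.sum_mul]
    rw [Finset.sum_congr rfl hRW, Finset.sum_sigma']
    refine Finset.sum_nbij' (fun σ => ⟨Equiv.swap p (σ p) * σ, σ p⟩)
      (fun x => Equiv.swap p x.2 * x.1) ?_ ?_ ?_ ?_ ?_
    · intro σ hσ
      simp only [Finset.mem_filter] at hσ
      obtain ⟨hσi, hne⟩ := hσ
      obtain ⟨h1, h2⟩ := invs_mem.mp hσi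
      obtain ⟨has, hτ, hτinv⟩ := fwd_facts hp h1 h2 rfl (fun h => hne h.symm)
      refine Finset.mem_sigma.mpr ⟨hτinv, ?_⟩
      simp only [Finset.mem_filter]
      exact ⟨has, by rw [hτ (σ p), if_neg hne, if_pos rfl]⟩
    · intro x hx
      obtain ⟨hxi, hxa⟩ := Finset.mem_sigma.mp hx
      obtain ⟨h1, h2⟩ := invs_mem.mp hxi
      simp only [Finset.mem_filter] at hxa
      obtain ⟨hσ, hσinv, hσp⟩ := bwd_facts hp h1 h2 hxa.1 hxa.2
      refine Finset.mem_filter.mpr ⟨hσinv, ?_⟩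
      rw [hσp]
      exact fun h => hp (h ▸ hxa.1)
    · intro σ hσ
      simp only
      rw [← mul_assoc, Equiv.swap_mul_self, one_mul]
    · intro x hx
      obtain ⟨hxi, hxa⟩ := Finset.mem_sigma.mp hx
      obtain ⟨h1, h2⟩ := invs_mem.mp hxi
      simp only [Finset.mem_filter] at hxa
      obtain ⟨hσ, hσinv, hσp⟩ := bwd_facts hp h1 h2 hxa.1 hxa.2
      refine Sigma.ext ?_ ?_
      · simp only [hσp, ← mul_assoc, Equiv.swap_mul_self, one_mul]
      · simp only [hσp]
        exact HEq.rfl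
    · intro σ hσ
      simp only [Finset.mem_filter] at hσ
      obtain ⟨hσi, hne⟩ := hσ
      obtain ⟨h1, h2⟩ := invs_mem.mp hσi
      have hnepa : p ≠ σ p := fun h => hne h.symm
      obtain ⟨has, hτ, hτinv⟩ := fwd_facts hp h1 h2 rfl hnepa
      have hap : σ (σ p) = p := invo_apply h1 p
      -- fixed-point sets
      have hfixset : (insert p s).filter (fun b => σ b = b)
          = (s.filter (fun b => (Equiv.swap p (σ p) * σ) b = b)).erase (σ p) := by
        ext b
        simp only [Finset.mem_erase, Finset.mem_filter, Finset.mem_insert]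
        constructor
        · rintro ⟨hb, hfb⟩
          have hbp : b ≠ p := fun h => hne (h ▸ hfb)
          have hba : b ≠ σ p := by
            intro h
            have h3 : σ (σ p) = σ p := by rw [← h]; exact hfb
            rw [hap] at h3
            exact hnepa h3
          refine ⟨hba, hb.resolve_left hbp, ?_⟩
          rw [hτ b, if_neg hbp, if_neg hba, hfb]
        · rintro ⟨hba, hbs, hfb⟩
          have hbp : b ≠ p := fun h => hp (h ▸ hbs)
          rw [hτ b, if_neg hbp, if_neg hba] at hfb
          exact ⟨Or.inr hbs, hfb⟩
      -- on the pair set, σ and τ agree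
      have hσb : ∀ b ∈ s.filter (fun b => b < (Equiv.swap p (σ p) * σ) b),
          σ b = (Equiv.swap p (σ p) * σ) b := by
        intro b hb
        simp only [Finset.mem_filter] at hb
        have hbp : b ≠ p := fun h => hp (h ▸ hb.1)
        have hba : b ≠ σ p := by
          intro h
          have h2b := hb.2
          rw [h] at h2b
          rw [hτ (σ p), if_neg (Ne.symm hnepa), if_pos rfl] at h2b
          exact lt_irrefl (σ p) h2b
        rw [hτ b, if_neg hbp, if_neg hba]
      have hτa : (Equiv.swap p (σ p) * σ) (σ p) = σ p := by
        rw [hτ (σ p), if_neg (Ne.symm hnepa), if_pos rfl]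
      rcases lt_or_gt_of_ne hnepa with hlt | hgt
      · -- p < σ p
        have hpairset : (insert p s).filter (fun b => b < σ b)
            = insert p (s.filter (fun b => b < (Equiv.swap p (σ p) * σ) b)) := by
          ext b
          simp only [Finset.mem_insert, Finset.mem_filter]
          constructor
          · rintro ⟨hb, hblt⟩
            rcases hb with rfl | hbs
            · exact Or.inl rfl
            · have hbp : b ≠ p := fun h => hp (h ▸ hbs)
              have hba : b ≠ σ p := by
                intro h; subst h
                rw [hap] at hblt
                exact absurd (hlt.trans hblt) (lt_irrefl p)
              refine Or.inr ⟨hbs, ?_⟩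
              rwa [hτ b, if_neg hbp, if_neg hba]
          · rintro (rfl | ⟨hbs, hblt⟩)
            · exact ⟨Or.inl rfl, hlt⟩
            · have hbp : b ≠ p := fun h => hp (h ▸ hbs)
              have hba : b ≠ σ p := by
                intro h
                rw [h, hτa] at hblt
                exact lt_irrefl _ hblt
              refine ⟨Or.inr hbs, ?_⟩
              rwa [hτ b, if_neg hbp, if_neg hba] at hblt
        have hpnot : p ∉ s.filter (fun b => b < (Equiv.swap p (σ p) * σ) b) :=
          fun h => hp (Finset.mem_filter.mp h).1
        have hprodpairs :
            (∏ x ∈ s.filter (fun b => b < (Equiv.swap p (σ p) * σ) b),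
              (c * ((A (idx x) (idx (σ x)) : ℝ) : ℂ)))
            = ∏ x ∈ s.filter (fun b => b < (Equiv.swap p (σ p) * σ) b),
              (c * ((A (idx x) (idx ((Equiv.swap p (σ p) * σ) x)) : ℝ) : ℂ)) :=
          Finset.prod_congr rfl (fun b hb => by rw [hσb b hb])
        rw [hfixset, hpairset, Finset.prod_insert hpnot, hprodpairs]
        have hAsym : A (idx p) (idx (σ p)) = A (idx (σ p)) (idx p) := (hA.apply _ _).symm
        rw [hAsym]
        ring
      · -- σ p < p
        have hanot : (σ p) ∉ s.filter (fun b => b < (Equiv.swap p (σ p) * σ) b) := by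
          simp only [Finset.mem_filter, hτa]
          exact fun h => absurd h.2 (lt_irrefl _)
        have hpairset : (insert p s).filter (fun b => b < σ b)
            = insert (σ p) (s.filter (fun b => b < (Equiv.swap p (σ p) * σ) b)) := by
          ext b
          simp only [Finset.mem_insert, Finset.mem_filter]
          constructor
          · rintro ⟨hb, hblt⟩
            rcases hb with rfl | hbs
            · exact absurd (hgt.trans hblt) (lt_irrefl _)
            · by_cases hba : b = σ p
              · exact Or.inl hba
              · have hbp : b ≠ p := fun h => hp (h ▸ hbs)
                refine Or.inr ⟨hbs, ?_⟩
                rwa [hτ b, if_neg hbp, if_neg hba]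
          · rintro (hba | ⟨hbs, hblt⟩)
            · refine ⟨Or.inr (hba ▸ has), ?_⟩
              rw [hba, hap]
              exact hgt
            · have hbp : b ≠ p := fun h => hp (h ▸ hbs)
              have hba : b ≠ σ p := by
                intro h
                rw [h, hτa] at hblt
                exact lt_irrefl _ hblt
              refine ⟨Or.inr hbs, ?_⟩
              rwa [hτ b, if_neg hbp, if_neg hba] at hblt
        have hprodpairs :
            (∏ x ∈ s.filter (fun b => b < (Equiv.swap p (σ p) * σ) b),
              (c * ((A (idx x) (idx (σ x)) : ℝ) : ℂ)))
            = ∏ x ∈ s.filter (fun b => b < (Equiv.swap p (σ p) * σ) b),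
              (c * ((A (idx x) (idx ((Equiv.swap p (σ p) * σ) x)) : ℝ) : ℂ)) :=
          Finset.prod_congr rfl (fun b hb => by rw [hσb b hb])
        rw [hfixset, hpairset, Finset.prod_insert hanot, hprodpairs, hap]
        ring

noncomputable def wickL (A : Matrix (Fin n) (Fin n) ℝ) (i : Fin n) : (Fin n → ℝ) →L[ℝ] ℝ :=
  (ContinuousLinearMap.proj i).comp (LinearMap.toContinuousLinearMap A.mulVecLin)

@[simp] lemma wickL_apply (A : Matrix (Fin n) (Fin n) ℝ) (i : Fin n) (J : Fin n → ℝ) :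
    wickL A i J = A.mulVec J i := rfl

noncomputable def Ww (A : Matrix (Fin n) (Fin n) ℝ) (c : ℂ) : (Fin n → ℝ) → ℂ :=
  fun J => Complex.exp ((c/2) * ((J ⬝ᵥ A.mulVec J : ℝ) : ℂ))

lemma hasFDerivAt_quad (A : Matrix (Fin n) (Fin n) ℝ) (J : Fin n → ℝ) :
    HasFDerivAt (fun J : Fin n → ℝ => J ⬝ᵥ A.mulVec J)
      (∑ i : Fin n, ((J i) • (wickL A i) + (A.mulVec J i) • (ContinuousLinearMap.proj i))) J := by
  have h : ∀ i : Fin n, HasFDerivAt (fun J : Fin n → ℝ => J i * A.mulVec J i)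
      ((J i) • (wickL A i) + (A.mulVec J i) • (ContinuousLinearMap.proj i)) J := by
    intro i
    have h1 : HasFDerivAt (fun J : Fin n → ℝ => J i)
        (ContinuousLinearMap.proj i : (Fin n → ℝ) →L[ℝ] ℝ) J :=
      hasFDerivAt_apply i J
    have h2 : HasFDerivAt (fun J : Fin n → ℝ => A.mulVec J i) (wickL A i) J :=
      (wickL A i).hasFDerivAt
    exact h1.mul h2
  exact HasFDerivAt.fun_sum (fun i (_ : i ∈ Finset.univ) => h i)

lemma quad_eval (A : Matrix (Fin n) (Fin n) ℝ) (hA : A.IsSymm) (J : Fin n → ℝ) (q : Fin n) :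
    ((∑ i : Fin n, ((J i) • (wickL A i) + (A.mulVec J i) • (ContinuousLinearMap.proj i)) :
        (Fin n → ℝ) →L[ℝ] ℝ)) (Pi.single q 1)
      = 2 * A.mulVec J q := by
  rw [ContinuousLinearMap.sum_apply]
  have : ∀ i : Fin n,
      (((J i) • (wickL A i) + (A.mulVec J i) • (ContinuousLinearMap.proj i) :
          (Fin n → ℝ) →L[ℝ] ℝ)) (Pi.single q 1)
      = J i * A i q + A.mulVec J i * (Pi.single q 1 : Fin n → ℝ) i := by
    intro i
    simp [Matrix.mulVec_single, ContinuousLinearMap.proj_apply]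
  rw [Finset.sum_congr rfl (fun i _ => this i), Finset.sum_add_distrib]
  have e1 : ∑ i : Fin n, J i * A i q = A.mulVec J q := by
    rw [Matrix.mulVec, dotProduct]
    exact Finset.sum_congr rfl fun i _ => by rw [hA.apply q i, mul_comm]
  have e2 : ∑ i : Fin n, A.mulVec J i * (Pi.single q 1 : Fin n → ℝ) i = A.mulVec J q := by
    rw [Finset.sum_eq_single q]
    · simp
    · intro b _ hb
      simp [Pi.single_eq_of_ne hb]
    · simp
  rw [e1, e2, two_mul]

lemma step_deriv (A : Matrix (Fin n) (Fin n) ℝ) (hA : A.IsSymm) (c : ℂ) (idx : Fin k → Fin n)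
    (s : Finset (Fin k)) (p : Fin k) (hp : p ∉ s) :
    partialDeriv n (idx p) (fun J => Ww A c J * Fw A c idx s J)
      = fun J => Ww A c J * Fw A c idx (insert p s) J := by
  classical
  funext J
  set DQ : (Fin n → ℝ) →L[ℝ] ℝ :=
    ∑ i : Fin n, ((J i) • (wickL A i) + (A.mulVec J i) • (ContinuousLinearMap.proj i)) with hDQ
  have hq : HasFDerivAt (fun J : Fin n → ℝ => J ⬝ᵥ A.mulVec J) DQ J := hasFDerivAt_quad A J
  have hq2 : HasFDerivAt (fun J : Fin n → ℝ => ((J ⬝ᵥ A.mulVec J : ℝ) : ℂ))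
      (Complex.ofRealCLM.comp DQ) J := (Complex.ofRealCLM.hasFDerivAt).comp J hq
  have hq3 : HasFDerivAt (fun J : Fin n → ℝ => (c/2) * ((J ⬝ᵥ A.mulVec J : ℝ) : ℂ))
      ((c/2) • (Complex.ofRealCLM.comp DQ)) J := hq2.const_mul (c/2)
  have hW : HasFDerivAt (Ww A c)
      ((Ww A c J) • ((c/2) • (Complex.ofRealCLM.comp DQ))) J := hq3.cexp
  -- derivative of Fw
  set D : Fin k → (Fin n → ℝ) →L[ℝ] ℂ :=
    fun a => c • (Complex.ofRealCLM.comp (wickL A (idx a))) with hD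
  have hg : ∀ a : Fin k, HasFDerivAt (fun J' : Fin n → ℝ => c * ((A.mulVec J' (idx a) : ℝ) : ℂ))
      (D a) J := fun a =>
    ((Complex.ofRealCLM.hasFDerivAt).comp J (wickL A (idx a)).hasFDerivAt).const_mul c
  have hF : HasFDerivAt (fun J' => Fw A c idx s J')
      (∑ σ ∈ invs s,
        (∏ a ∈ s.filter fun a => a < σ a, (c * ((A (idx a) (idx (σ a)) : ℝ) : ℂ))) •
          (∑ a ∈ s.filter (fun a => σ a = a),
            (∏ b ∈ (s.filter (fun a => σ a = a)).erase a,
              (c * ((A.mulVec J (idx b) : ℝ) : ℂ))) • D a)) J := by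
    refine HasFDerivAt.fun_sum fun σ _ => ?_
    have hprod : HasFDerivAt
        (fun J' => ∏ a ∈ s.filter (fun a => σ a = a), (c * ((A.mulVec J' (idx a) : ℝ) : ℂ)))
        (∑ a ∈ s.filter (fun a => σ a = a),
          (∏ b ∈ (s.filter (fun a => σ a = a)).erase a,
            (c * ((A.mulVec J (idx b) : ℝ) : ℂ))) • D a) J :=
      HasFDerivAt.finset_prod fun a _ => hg a
    exact hprod.mul_const
      (∏ a ∈ s.filter fun a => a < σ a, (c * ((A (idx a) (idx (σ a)) : ℝ) : ℂ)))
  have hWF : HasFDerivAt (fun J => Ww A c J * Fw A c idx s J) _ J := hW.mul hF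
  show fderiv ℝ (fun J => Ww A c J * Fw A c idx s J) J (Pi.single (idx p) 1) = _
  rw [hWF.fderiv]
  have hq4 : DQ (Pi.single (idx p) 1) = 2 * A.mulVec J (idx p) := quad_eval A hA J (idx p)
  have hDa : ∀ a : Fin k, D a (Pi.single (idx p) 1) = c * ((A (idx a) (idx p) : ℝ) : ℂ) := by
    intro a
    simp [hD, Matrix.mulVec_single]
  simp only [ContinuousLinearMap.add_apply, ContinuousLinearMap.coe_smul', Pi.smul_apply,
    ContinuousLinearMap.coe_sum', Finset.sum_apply, ContinuousLinearMap.smul_apply,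
    ContinuousLinearMap.coe_comp', Function.comp_apply, Complex.ofRealCLM_apply,
    smul_eq_mul, hq4, hDa]
  rw [Fw_insert A hA c idx s p hp J,
    Finset.sum_congr rfl (fun σ _ => mul_comm
      (∏ a ∈ Finset.filter (fun a => a < σ a) s, c * ((A (idx a) (idx (σ a)) : ℝ) : ℂ))
      (∑ a ∈ Finset.filter (fun a => σ a = a) s,
        (∏ b ∈ (Finset.filter (fun a => σ a = a) s).erase a,
          c * ((A.mulVec J (idx b) : ℝ) : ℂ)) *
          (c * ((A (idx a) (idx p) : ℝ) : ℂ))))]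
  push_cast
  ring

lemma Fw_empty (A : Matrix (Fin n) (Fin n) ℝ) (c : ℂ) (idx : Fin k → Fin n) (J : Fin n → ℝ) :
    Fw A c idx (∅ : Finset (Fin k)) J = 1 := by
  have h : invs (∅ : Finset (Fin k)) = {1} := by
    ext σ
    simp only [invs_mem, Finset.mem_singleton]
    constructor
    · rintro ⟨-, h2⟩
      exact Equiv.ext fun a => h2 a (Finset.notMem_empty a)
    · rintro rfl
      exact ⟨one_mul 1, fun a _ => rfl⟩
  rw [Fw, h]
  simp

lemma Fw_main (A : Matrix (Fin n) (Fin n) ℝ) (hA : A.IsSymm) (c : ℂ) (idx : Fin k → Fin n) :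
    ∀ (k' : ℕ) (pos : Fin k' → Fin k), Function.Injective pos →
      iteratedPartialDeriv n (fun j => idx (pos j)) (Ww A c)
        = fun J => Ww A c J * Fw A c idx (Finset.univ.image pos) J := by
  intro k'
  induction k' with
  | zero =>
    intro pos _
    funext J
    show Ww A c J = _
    have himg : (Finset.univ : Finset (Fin 0)).image pos = ∅ := by simp
    rw [himg, Fw_empty, mul_one]
  | succ k' ih =>
    intro pos hpos
    have hinj : Function.Injective (fun j : Fin k' => pos j.succ) :=
      fun a b h => Fin.succ_injective _ (hpos h)
    have ih2 : iteratedPartialDeriv n (fun j : Fin k' => idx (pos j.succ)) (Ww A c)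
        = fun J => Ww A c J * Fw A c idx (Finset.univ.image fun j : Fin k' => pos j.succ) J :=
      ih (fun j => pos j.succ) hinj
    show partialDeriv n (idx (pos 0))
        (iteratedPartialDeriv n (fun j => idx (pos j.succ)) (Ww A c)) = _
    rw [ih2]
    have hp : pos 0 ∉ Finset.univ.image (fun j : Fin k' => pos j.succ) := by
      simp only [Finset.mem_image, Finset.mem_univ, true_and, not_exists]
      intro j hj
      exact (Fin.succ_ne_zero j) (hpos hj)
    have himg : (Finset.univ.image pos)
        = insert (pos 0) (Finset.univ.image fun j : Fin k' => pos j.succ) := by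
      ext b
      simp only [Finset.mem_image, Finset.mem_univ, true_and, Finset.mem_insert]
      constructor
      · rintro ⟨j, rfl⟩
        rcases Fin.eq_zero_or_eq_succ j with rfl | ⟨i, rfl⟩
        · exact Or.inl rfl
        · exact Or.inr ⟨i, rfl⟩
      · rintro (rfl | ⟨i, rfl⟩)
        · exact ⟨0, rfl⟩
        · exact ⟨i.succ, rfl⟩
    rw [himg]
    exact step_deriv A hA c idx _ (pos 0) hp

lemma Fw_univ_zero (A : Matrix (Fin n) (Fin n) ℝ) (c : ℂ) (idx : Fin k → Fin n) :
    Fw A c idx Finset.univ 0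
      = ∑ σ ∈ Finset.univ.filter (fun σ : Equiv.Perm (Fin k) => σ * σ = 1 ∧ ∀ a, σ a ≠ a),
          ∏ a ∈ Finset.univ.filter (fun a : Fin k => a < σ a),
            (c * ((A (idx a) (idx (σ a)) : ℝ) : ℂ)) := by
  classical
  rw [Fw, ← Finset.sum_filter_add_sum_filter_not (invs Finset.univ)
    (fun σ => ∀ a, σ a ≠ a)]
  have h2 : ∑ σ ∈ (invs (Finset.univ : Finset (Fin k))).filter (fun σ => ¬ ∀ a, σ a ≠ a),
      (∏ a ∈ Finset.univ.filter fun a => σ a = a, (c * ((A.mulVec 0 (idx a) : ℝ) : ℂ))) *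
      (∏ a ∈ Finset.univ.filter fun a => a < σ a, (c * ((A (idx a) (idx (σ a)) : ℝ) : ℂ))) = 0 := by
    refine Finset.sum_eq_zero fun σ hσ => ?_
    simp only [Finset.mem_filter, not_forall, not_not] at hσ
    obtain ⟨-, a, ha⟩ := hσ
    have hmem : a ∈ Finset.univ.filter fun a => σ a = a := by
      simp [ha]
    rw [Finset.prod_eq_zero hmem (by simp [Matrix.mulVec_zero]), zero_mul]
  rw [h2, add_zero]
  have hset : (invs (Finset.univ : Finset (Fin k))).filter (fun σ => ∀ a, σ a ≠ a)
      = Finset.univ.filter (fun σ : Equiv.Perm (Fin k) => σ * σ = 1 ∧ ∀ a, σ a ≠ a) := by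
    ext σ
    simp only [Finset.mem_filter, invs_mem, Finset.mem_univ, true_and]
    constructor
    · rintro ⟨⟨h1, -⟩, h3⟩; exact ⟨h1, h3⟩
    · rintro ⟨h1, h3⟩; exact ⟨⟨h1, fun a ha => absurd trivial ha⟩, h3⟩
  rw [hset]
  refine Finset.sum_congr rfl fun σ hσ => ?_
  simp only [Finset.mem_filter, Finset.mem_univ, true_and] at hσ
  have hempty : Finset.univ.filter (fun a => σ a = a) = (∅ : Finset (Fin k)) := by
    ext a
    simp [hσ.2 a]
  rw [hempty, Finset.prod_empty, one_mul]

lemma pairs_card {σ : Equiv.Perm (Fin k)} (h1 : σ * σ = 1) (h2 : ∀ a, σ a ≠ a) :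
    k = 2 * (Finset.univ.filter (fun a : Fin k => a < σ a)).card := by
  classical
  have hunion : (Finset.univ : Finset (Fin k))
      = (Finset.univ.filter (fun a => a < σ a)) ∪ (Finset.univ.filter (fun a => σ a < a)) := by
    ext a
    simp only [Finset.mem_univ, Finset.mem_union, Finset.mem_filter, true_and, true_iff]
    rcases lt_trichotomy a (σ a) with h | h | h
    · exact Or.inl h
    · exact absurd h.symm (h2 a)
    · exact Or.inr h
  have hdisj : Disjoint (Finset.univ.filter (fun a : Fin k => a < σ a))
      (Finset.univ.filter (fun a : Fin k => σ a < a)) := by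
    rw [Finset.disjoint_filter]
    intro a _ hlt hlt'
    exact absurd hlt' (not_lt_of_gt hlt)
  have hcard : (Finset.univ.filter (fun a : Fin k => σ a < a)).card
      = (Finset.univ.filter (fun a : Fin k => a < σ a)).card := by
    refine Finset.card_bij' (fun a _ => σ a) (fun a _ => σ a) ?_ ?_ ?_ ?_
    · intro a ha
      simp only [Finset.mem_filter, Finset.mem_univ, true_and] at ha ⊢
      rw [invo_apply h1]
      exact ha
    · intro a ha
      simp only [Finset.mem_filter, Finset.mem_univ, true_and] at ha ⊢
      rw [invo_apply h1]
      exact ha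
    · intro a _; exact invo_apply h1 a
    · intro a _; exact invo_apply h1 a
  have htot := Finset.card_union_of_disjoint hdisj
  rw [← hunion, hcard] at htot
  have hcardu : (Finset.univ : Finset (Fin k)).card = k := by simp
  omega

end WickAux

/-- **Wick's Lemma.** For `W(J) = exp((ℏ/2i)⟨J, Q⁻¹J⟩)` the iterated
partial derivative `∂_{J_{i₁}} ⋯ ∂_{J_{i_k}} W |_{J=0}` vanishes for odd `k`, and for
`k = 2m` equals `(ℏ/i)^m ∑_σ ∏_{a < σ(a)} (Q⁻¹)_{i_a i_{σ(a)}}`, the sum being over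
fixed-point-free involutions (perfect matchings) of `{1,…,2m}`. -/
theorem wick_lemma
    (n k : ℕ) (hk : 1 ≤ k)
    (Q : Matrix (Fin n) (Fin n) ℝ) (hQ : Q.IsSymm) (hQdet : Q.det ≠ 0)
    (ℏ : ℝ) (hℏ : 0 < ℏ) (idx : Fin k → Fin n) :
    let W : (Fin n → ℝ) → ℂ := fun J =>
      Complex.exp (((ℏ : ℂ) / (2 * Complex.I)) * ((J ⬝ᵥ Q⁻¹.mulVec J : ℝ) : ℂ))
    (Odd k → iteratedPartialDeriv n idx W 0 = 0) ∧
    (∀ m : ℕ, k = 2 * m →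
      iteratedPartialDeriv n idx W 0 =
        ((ℏ : ℂ) / Complex.I) ^ m *
          ∑ σ ∈ Finset.univ.filter
              (fun σ : Equiv.Perm (Fin k) => σ * σ = 1 ∧ ∀ a, σ a ≠ a),
            ∏ a ∈ Finset.univ.filter (fun a : Fin k => a < σ a),
              ((Q⁻¹ (idx a) (idx (σ a)) : ℝ) : ℂ)) := by
  intro W
  classical
  set c : ℂ := (ℏ : ℂ) / Complex.I with hc
  have hA : (Q⁻¹).IsSymm := by
    rw [Matrix.IsSymm, Matrix.transpose_nonsing_inv, hQ.eq]
  have hWeq : W = Ww Q⁻¹ c := by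
    funext J
    show Complex.exp _ = Complex.exp _
    congr 1
    rw [hc]
    ring
  have hW0 : Ww Q⁻¹ c 0 = 1 := by
    simp [Ww]
  have hmain' : iteratedPartialDeriv n idx (Ww Q⁻¹ c)
      = fun J => Ww Q⁻¹ c J *
          Fw Q⁻¹ c idx (Finset.univ.image (id : Fin k → Fin k)) J :=
    Fw_main Q⁻¹ hA c idx k id (fun a b h => h)
  rw [Finset.image_id] at hmain'
  have hzero : iteratedPartialDeriv n idx W 0
      = ∑ σ ∈ Finset.univ.filter (fun σ : Equiv.Perm (Fin k) => σ * σ = 1 ∧ ∀ a, σ a ≠ a),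
          ∏ a ∈ Finset.univ.filter (fun a : Fin k => a < σ a),
            (c * ((Q⁻¹ (idx a) (idx (σ a)) : ℝ) : ℂ)) := by
    rw [hWeq, hmain']
    show Ww Q⁻¹ c 0 * Fw Q⁻¹ c idx Finset.univ 0 = _
    rw [hW0, one_mul, Fw_univ_zero]
  constructor
  · intro hodd
    rw [hzero]
    have hE : Finset.univ.filter (fun σ : Equiv.Perm (Fin k) => σ * σ = 1 ∧ ∀ a, σ a ≠ a)
        = ∅ := by
      refine Finset.eq_empty_of_forall_notMem fun σ hσ => ?_
      simp only [Finset.mem_filter, Finset.mem_univ, true_and] at hσ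
      have := pairs_card hσ.1 hσ.2
      exact (Nat.not_even_iff_odd.mpr hodd)
        ⟨(Finset.univ.filter (fun a : Fin k => a < σ a)).card, by omega⟩
    rw [hE, Finset.sum_empty]
  · intro m hm
    rw [hzero, Finset.mul_sum]
    refine Finset.sum_congr rfl fun σ hσ => ?_
    simp only [Finset.mem_filter, Finset.mem_univ, true_and] at hσ
    have hcard := pairs_card hσ.1 hσ.2
    rw [Finset.prod_mul_distrib, Finset.prod_const]
    have hcm : (Finset.univ.filter (fun a : Fin k => a < σ a)).card = m := by omega
    rw [hcm]
end

section
/- Berezin/Grassmann determinant identity: let B be a real n×n matrix. In the exterior algebra Λ(ℝⁿ ⊕ ℝⁿ), write e_i for the image of the i-th standard basis vector of the first summand and f_j for the image of the j-th standard basis vector of the second summand. Then the n-th power of the 2-form ω = Σ_{i,j=1}^{n} B_{ij} · e_i ∧ f_j satisfies ω^n = n! · det(B) · (e₁ ∧ f₁ ∧ e₂ ∧ f₂ ∧ ⋯ ∧ e_n ∧ f_n). In particular the coefficient of the top exterior monomial e₁∧f₁∧⋯∧e_n∧f_n in exp(ω) is det(B), which is the Berezin-integral representation of the determinant det B = ∫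 μ^c e^{B_i^j θ^i θ̄_j}. -/
set_option synthInstance.maxHeartbeats 1000000
set_option maxHeartbeats 1600000

open ExteriorAlgebra

namespace GrassmannAux

noncomputable section

variable {M : Type*} [AddCommGroup M] [Module ℝ M]

lemma iota_swap (x y : M) : ι ℝ x * ι ℝ y = -(ι ℝ y * ι ℝ x) :=
  eq_neg_of_add_eq_zero_left (ι_add_mul_swap x y)

lemma block_comm (a b c d : M) :
    (ι ℝ a * ι ℝ b) * (ι ℝ c * ι ℝ d) = (ι ℝ c * ι ℝ d) * (ι ℝ a * ι ℝ b) := by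
  have h1 : ∀ x y z : M, (ι ℝ x * ι ℝ y) * ι ℝ z = ι ℝ z * (ι ℝ x * ι ℝ y) := by
    intro x y z
    rw [mul_assoc, iota_swap y z, mul_neg, ← mul_assoc, iota_swap x z, neg_mul, neg_neg,
      mul_assoc]
  rw [mul_assoc, ← h1 c d b, ← mul_assoc, ← mul_assoc, ← mul_assoc, h1 c d a,
    mul_assoc, mul_assoc, mul_assoc, mul_assoc]

lemma block_zero_fst (a b d : M) : (ι ℝ a * ι ℝ b) * (ι ℝ a * ι ℝ d) = 0 := by
  rw [mul_assoc, ← mul_assoc (ι ℝ b), iota_swap b a, neg_mul, mul_neg, ← mul_assoc,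
    ← mul_assoc, ι_sq_zero, zero_mul, zero_mul, neg_zero]

lemma block_zero_snd (a b c : M) : (ι ℝ a * ι ℝ b) * (ι ℝ c * ι ℝ b) = 0 := by
  rw [mul_assoc, ← mul_assoc (ι ℝ b), iota_swap b c, neg_mul, mul_neg, mul_assoc,
    ι_sq_zero, mul_zero, mul_zero, neg_zero]

lemma L0 (m : ℕ) : ∀ (v : Fin m → M) (x : M),
    ι ℝ x * (List.ofFn fun k => ι ℝ (v k)).prod
      = ((-1 : ℝ) ^ m) • ((List.ofFn fun k => ι ℝ (v k)).prod * ι ℝ x) := by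
  induction m with
  | zero => intro v x; simp
  | succ m ih =>
    intro v x
    rw [List.ofFn_succ, List.prod_cons, ← mul_assoc, iota_swap x (v 0), neg_mul, mul_assoc,
      ih (fun k => v k.succ) x, mul_smul_comm, ← neg_smul, ← mul_assoc]
    congr 1
    ring

lemma L1 (m : ℕ) : ∀ (u v : Fin m → M),
    (List.ofFn fun k => ι ℝ (u k) * ι ℝ (v k)).prod
      = ((-1 : ℝ) ^ (m.choose 2)) •
        ((List.ofFn fun k => ι ℝ (u k)).prod * (List.ofFn fun k => ι ℝ (v k)).prod) := by
  induction m with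
  | zero => intro u v; simp
  | succ m ih =>
    intro u v
    rw [List.ofFn_succ, List.prod_cons, ih (fun k => u k.succ) (fun k => v k.succ),
      List.ofFn_succ (f := fun k => ι ℝ (u k)), List.ofFn_succ (f := fun k => ι ℝ (v k)),
      List.prod_cons, List.prod_cons, mul_smul_comm]
    have h0 := L0 m (fun k => u k.succ) (v 0)
    calc ((-1:ℝ) ^ (m.choose 2)) • (ι ℝ (u 0) * ι ℝ (v 0) *
          ((List.ofFn fun k => ι ℝ (u k.succ)).prod * (List.ofFn fun k => ι ℝ (v k.succ)).prod))
        = ((-1:ℝ) ^ (m.choose 2)) • (ι ℝ (u 0) * ((ι ℝ (v 0) *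
            (List.ofFn fun k => ι ℝ (u k.succ)).prod) * (List.ofFn fun k => ι ℝ (v k.succ)).prod)) := by
          rw [mul_assoc, mul_assoc]
      _ = ((-1:ℝ) ^ ((m+1).choose 2)) • (ι ℝ (u 0) * (List.ofFn fun k => ι ℝ (u k.succ)).prod *
            (ι ℝ (v 0) * (List.ofFn fun k => ι ℝ (v k.succ)).prod)) := by
          rw [h0]
          simp only [mul_smul_comm, smul_mul_assoc, smul_smul]
          rw [Nat.choose_succ_succ, Nat.choose_one_right, pow_add]
          congr 1
          · ring
          · simp [mul_assoc]

lemma L2 (m : ℕ) (w : Fin m → M) (τ : Equiv.Perm (Fin m)) :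
    (List.ofFn fun k => ι ℝ (w (τ k))).prod
      = (((Equiv.Perm.sign τ : ℤ) : ℝ)) • (List.ofFn fun k => ι ℝ (w k)).prod := by
  have h := AlternatingMap.map_perm (ιMulti ℝ m (M := M)) w τ
  rw [ιMulti_apply, ιMulti_apply] at h
  simpa [Function.comp, Units.smul_def, Int.cast_smul_eq_zsmul] using h

abbrev V (n : ℕ) := (Fin n → ℝ) × (Fin n → ℝ)
abbrev A (n : ℕ) := ExteriorAlgebra ℝ (V n)

def Ee (n : ℕ) (i : Fin n) : A n := ι ℝ ((Pi.single i 1, 0) : V n)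
def Ff (n : ℕ) (j : Fin n) : A n := ι ℝ ((0, Pi.single j 1) : V n)
def Gg (n : ℕ) (p : Fin n × Fin n) : A n := Ee n p.1 * Ff n p.2

lemma gg_comm {n : ℕ} (p q : Fin n × Fin n) : Gg n p * Gg n q = Gg n q * Gg n p :=
  block_comm _ _ _ _

lemma gg_zero_fst {n : ℕ} {p q : Fin n × Fin n} (h : p.1 = q.1) : Gg n p * Gg n q = 0 := by
  unfold Gg Ee Ff; rw [h]; exact block_zero_fst _ _ _

lemma gg_zero_snd {n : ℕ} {p q : Fin n × Fin n} (h : p.2 = q.2) : Gg n p * Gg n q = 0 := by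
  unfold Gg Ee Ff; rw [h]; exact block_zero_snd _ _ _

lemma L3 {n : ℕ} (τ : Equiv.Perm (Fin n)) :
    (List.ofFn fun k => Gg n (k, τ k)).prod
      = (((Equiv.Perm.sign τ : ℤ) : ℝ)) • (List.ofFn fun k => Gg n (k, k)).prod := by
  unfold Gg Ee Ff
  rw [L1 n (fun k => ((Pi.single k 1, 0) : V n)) (fun k => ((0, Pi.single (τ k) 1) : V n)),
    L1 n (fun k => ((Pi.single k 1, 0) : V n)) (fun k => ((0, Pi.single k 1) : V n)),
    L2 n (fun j => ((0, Pi.single j 1) : V n)) τ]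
  rw [mul_smul_comm, smul_smul, smul_smul, mul_comm]

abbrev S (n : ℕ) : Subalgebra ℝ (A n) := Algebra.adjoin ℝ (Set.range (Gg n))

instance (n : ℕ) : CommRing (S n) :=
  Algebra.adjoinCommRingOfComm ℝ (by
    rintro a ⟨p, rfl⟩ b ⟨q, rfl⟩
    exact gg_comm p q)

def Gh {n : ℕ} (p : Fin n × Fin n) : S n :=
  ⟨Gg n p, Algebra.subset_adjoin ⟨p, rfl⟩⟩

lemma val_prod {n m : ℕ} (h : Fin m → S n) :
    ((∏ k, h k : S n) : A n) = (List.ofFn fun k => ((h k : A n))).prod := by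
  rw [← List.prod_ofFn, SubmonoidClass.coe_list_prod, List.map_ofFn]
  rfl

lemma gh_prod_zero {n : ℕ} (g : Fin n → Fin n × Fin n)
    (hbad : ¬ (Function.Injective fun k => (g k).1) ∨ ¬ (Function.Injective fun k => (g k).2)) :
    (∏ k, Gh (g k) : S n) = 0 := by
  classical
  have key : ∀ (a b : Fin n), a ≠ b → Gh (g a) * Gh (g b) = 0 →
      (∏ k, Gh (g k) : S n) = 0 := by
    intro a b hab hz
    rw [← Finset.mul_prod_erase Finset.univ _ (Finset.mem_univ a),
      ← Finset.mul_prod_erase _ _ (Finset.mem_erase.2 ⟨Ne.symm hab, Finset.mem_univ b⟩),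
      ← mul_assoc, hz, zero_mul]
  rcases hbad with h | h
  · simp only [Function.Injective, not_forall] at h
    obtain ⟨a, b, hfst, hab⟩ := h
    refine key a b hab (Subtype.ext ?_)
    exact gg_zero_fst hfst
  · simp only [Function.Injective, not_forall] at h
    obtain ⟨a, b, hsnd, hab⟩ := h
    refine key a b hab (Subtype.ext ?_)
    exact gg_zero_snd hsnd

lemma hrho {n : ℕ} (ρ : Equiv.Perm (Fin n)) :
    (∏ k, (Gh (k, ρ k)) : S n)
      = (((Equiv.Perm.sign ρ : ℤ) : ℝ)) • ∏ k, (Gh (k, k) : S n) := by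
  refine Subtype.ext ?_
  rw [SetLike.val_smul, val_prod, val_prod]
  exact L3 ρ

lemma key (n : ℕ) (B : Matrix (Fin n) (Fin n) ℝ) :
    (∑ p : Fin n × Fin n, B p.1 p.2 • Gh p) ^ n
      = ((n.factorial : ℝ) * B.det) • ∏ k : Fin n, (Gh (k, k) : S n) := by
  classical
  rw [Fintype.sum_pow]
  have hterm : ∀ g : Fin n → Fin n × Fin n,
      (∏ k, B (g k).1 (g k).2 • (Gh (g k) : S n)) =
        (∏ k, B (g k).1 (g k).2) • ∏ k, (Gh (g k) : S n) := by
    intro g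
    simp only [Algebra.smul_def, Finset.prod_mul_distrib, map_prod]
  simp_rw [hterm]
  rw [← Finset.sum_filter_add_sum_filter_not Finset.univ
      (fun g : Fin n → Fin n × Fin n =>
        (Function.Injective fun k => (g k).1) ∧ (Function.Injective fun k => (g k).2))]
  have h2 : ∑ g ∈ Finset.univ.filter (fun g : Fin n → Fin n × Fin n =>
        ¬ ((Function.Injective fun k => (g k).1) ∧ (Function.Injective fun k => (g k).2))),
      (∏ k, B (g k).1 (g k).2) • ∏ k, (Gh (g k) : S n) = 0 := by
    refine Finset.sum_eq_zero fun g hg => ?_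
    rw [Finset.mem_filter] at hg
    rw [gh_prod_zero g (by tauto), smul_zero]
  rw [h2, add_zero]
  have h3 : ∑ g ∈ Finset.univ.filter (fun g : Fin n → Fin n × Fin n =>
        (Function.Injective fun k => (g k).1) ∧ (Function.Injective fun k => (g k).2)),
      (∏ k, B (g k).1 (g k).2) • ∏ k, (Gh (g k) : S n)
      = ∑ στ : Equiv.Perm (Fin n) × Equiv.Perm (Fin n),
          (∏ k, B (στ.1 k) (στ.2 k)) • ∏ k, (Gh (στ.1 k, στ.2 k) : S n) := by
    refine (Finset.sum_bij (fun στ _ => fun k => (στ.1 k, στ.2 k)) ?_ ?_ ?_ ?_).symm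
    · intro στ _
      refine Finset.mem_filter.2 ⟨Finset.mem_univ _, στ.1.injective, στ.2.injective⟩
    · intro a₁ _ a₂ _ h
      refine Prod.ext (Equiv.ext fun k => ?_) (Equiv.ext fun k => ?_)
      · exact congrArg Prod.fst (congrFun h k)
      · exact congrArg Prod.snd (congrFun h k)
    · intro g hg
      rw [Finset.mem_filter] at hg
      obtain ⟨-, h1, h2⟩ := hg
      refine ⟨(Equiv.ofBijective _ (Finite.injective_iff_bijective.1 h1),
        Equiv.ofBijective _ (Finite.injective_iff_bijective.1 h2)), Finset.mem_univ _, ?_⟩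
      funext k
      exact Prod.mk.eta
    · intro στ _
      rfl
  rw [h3, Fintype.sum_prod_type]
  have inner : ∀ σ : Equiv.Perm (Fin n),
      (∑ τ : Equiv.Perm (Fin n), (∏ k, B (σ k) (τ k)) • ∏ k, (Gh (σ k, τ k) : S n))
        = ∑ ρ : Equiv.Perm (Fin n), (∏ k, B k (ρ k)) • ∏ k, (Gh (k, ρ k) : S n) := by
    intro σ
    rw [← Equiv.sum_comp (Equiv.mulRight σ⁻¹)
      (fun ρ => (∏ k, B k (ρ k)) • ∏ k, (Gh (k, ρ k) : S n))]
    refine Finset.sum_congr rfl fun τ _ => ?_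
    have hB : ∏ k, B (σ k) (τ k) = ∏ k, B k ((Equiv.mulRight σ⁻¹ τ) k) := by
      rw [← Equiv.prod_comp σ (fun j => B j ((Equiv.mulRight σ⁻¹ τ) j))]
      simp [Equiv.Perm.mul_apply]
    have hG : (∏ k, (Gh (σ k, τ k) : S n)) = ∏ k, (Gh (k, (Equiv.mulRight σ⁻¹ τ) k) : S n) := by
      rw [← Equiv.prod_comp σ (fun j => (Gh (j, (Equiv.mulRight σ⁻¹ τ) j) : S n))]
      simp [Equiv.Perm.mul_apply]
    rw [hB, hG]
  rw [Finset.sum_congr rfl (fun σ _ => inner σ), Finset.sum_const, Finset.card_univ,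
    Fintype.card_perm, Fintype.card_fin]
  simp_rw [hrho, smul_smul]
  rw [← Finset.sum_smul]
  have hdet : (∑ ρ : Equiv.Perm (Fin n), (∏ k, B k (ρ k)) * ((Equiv.Perm.sign ρ : ℤ) : ℝ))
      = B.det := by
    rw [← Matrix.det_transpose B, Matrix.det_apply']
    refine Finset.sum_congr rfl fun ρ _ => ?_
    simp [Matrix.transpose_apply, mul_comm]
  rw [hdet, ← Nat.cast_smul_eq_nsmul ℝ, smul_smul]

end

end GrassmannAux

/-- **Berezin/Grassmann determinant identity.** In the exterior algebra
`Λ(ℝⁿ ⊕ ℝⁿ)`, with `e_i` (resp. `f_j`) the generators coming from the first (resp.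
second) summand, the 2-form `ω = ∑_{i,j} B_{ij} e_i ∧ f_j` satisfies
`ω^n = n! · det B · (e₁ ∧ f₁ ∧ ⋯ ∧ e_n ∧ f_n)`. -/
theorem grassmann_determinant
    (n : ℕ) (B : Matrix (Fin n) (Fin n) ℝ) :
    (∑ i : Fin n, ∑ j : Fin n,
        B i j •
          (ExteriorAlgebra.ι ℝ ((Pi.single i 1, 0) : (Fin n → ℝ) × (Fin n → ℝ)) *
            ExteriorAlgebra.ι ℝ ((0, Pi.single j 1) : (Fin n → ℝ) × (Fin n → ℝ)))) ^ n =
      ((n.factorial : ℝ) * B.det) •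
        (List.ofFn (fun i : Fin n =>
          ExteriorAlgebra.ι ℝ ((Pi.single i 1, 0) : (Fin n → ℝ) × (Fin n → ℝ)) *
            ExteriorAlgebra.ι ℝ ((0, Pi.single i 1) : (Fin n → ℝ) × (Fin n → ℝ)))).prod := by
  classical
  have hkey := congrArg (Subalgebra.val (GrassmannAux.S n)) (GrassmannAux.key n B)
  rw [map_pow, map_smul, map_sum] at hkey
  simp_rw [map_smul] at hkey
  simp only [Subalgebra.coe_val] at hkey
  rw [GrassmannAux.val_prod] at hkey
  rw [Fintype.sum_prod_type] at hkey
  exact hkey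
end
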